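/- arXiv:hep-th/0406213 — 2 statements merged into one kernel-verified Lean document; each statement's English description precedes it below -/
import Mathlib

section
/- Let A be a positive definite Hermitian n×n complex matrix and B an arbitrary n×n complex matrix. Then the matrix Y := (1/2) ∫_ℝ A^{it−1/2} B A^{−it−1/2} dt / cosh(π t) satisfies A Y + Y A = B. -/
open MeasureTheory Complex Matrix
open scoped ComplexOrder

/-- The complex matrix power `A ^ z` of a Hermitian matrix `A`, defined by functional
calculus: apply `fun x => x ^ z` to the eigenvalues of `A` in a unitary eigenbasis.
(Junk value `0` if `A` is not Hermitian.) -/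
noncomputable def matCpow {n : ℕ} (A : Matrix (Fin n) (Fin n) ℂ) (z : ℂ) :
    Matrix (Fin n) (Fin n) ℂ :=
  @dite _ A.IsHermitian (Classical.dec _)
    (fun hA => (hA.eigenvectorUnitary : Matrix (Fin n) (Fin n) ℂ) *
        Matrix.diagonal (fun i => (hA.eigenvalues i : ℂ) ^ z) *
        star (hA.eigenvectorUnitary : Matrix (Fin n) (Fin n) ℂ))
    (fun _ => 0)

/-- The positive semidefinite square root of a positive semidefinite matrix.
(Junk value `0` if `A` is not positive semidefinite.) -/
noncomputable def matSqrt {n : ℕ} (A : Matrix (Fin n) (Fin n) ℂ) :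
    Matrix (Fin n) (Fin n) ℂ :=
  @dite _ A.PosSemidef (Classical.dec _) (fun h => (h.1.eigenvectorUnitary : Matrix (Fin n) (Fin n) ℂ) *
      Matrix.diagonal ((↑) ∘ Real.sqrt ∘ h.1.eigenvalues) *
      star (h.1.eigenvectorUnitary : Matrix (Fin n) (Fin n) ℂ)) (fun _ => 0)

/-- `I_g(X) := ∫_ℝ (√g)^{it+1/2} X (√g)^{-it-1/2} dt / cosh (π t)`, taken entrywise. -/
noncomputable def Ig {n : ℕ} (g X : Matrix (Fin n) (Fin n) ℂ) :
    Matrix (Fin n) (Fin n) ℂ :=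
  Matrix.of fun i j => ∫ t : ℝ,
    (matCpow (matSqrt g) (Complex.I * t + 1 / 2) * X *
      matCpow (matSqrt g) (-(Complex.I * t) - 1 / 2)) i j / (Real.cosh (Real.pi * t) : ℂ)

/-! In an eigenbasis `A = U diag(λ) U*` the Sylvester equation decouples entrywise: it is solved
by `U M U*` with `M k l = (U* B U) k l / (λ k + λ l)`. Conjugating the integral by `U` reduces
the theorem to the scalar identity `∫ a^(it-1/2) b^(-it-1/2) / cosh (π t) dt = 2 / (a + b)`,
which is `(ab)^(-1/2)` times the self-duality of `sech` under the Fourier transform,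
`∫ e^(ixt) / cosh (π t) dt = 1 / cosh (x / 2)`. The latter is Euler's reflection formula
`B(s, 1 - s) = π / sin (π s)` after the substitution `y = sigmoid u` in the beta integral. -/

open scoped Real
open Unitary

theorem sigmoid_mul_one_sub_sigmoid_smul_betaIntegrand (s : ℂ) (u : ℝ) :
    (Real.sigmoid u * (1 - Real.sigmoid u)) •
        ((Real.sigmoid u : ℂ) ^ (s - 1) * (1 - (Real.sigmoid u : ℂ)) ^ (1 - s - 1)) =
      cexp ((s - 1 / 2) * u) / (2 * Complex.cosh (u / 2)) := by
  have hσ : 0 < Real.sigmoid u := Real.sigmoid_pos u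
  have hσ' : 1 - Real.sigmoid u = Real.sigmoid u * Real.exp (-u) := by
    rw [Real.sigmoid_mul_rexp_neg, Real.sigmoid_neg]
  have hσe : (Real.sigmoid u : ℂ) = (1 + cexp (-u))⁻¹ := by
    rw [Real.sigmoid_def]; push_cast; rfl
  set σ := Real.sigmoid u
  have hσ'_pos : 0 < 1 - σ := by rw [hσ']; positivity
  have hexp : cexp (Real.log σ * (s - 1)) * cexp (Real.log (1 - σ) * (1 - s - 1)) =
      cexp (s * u) / σ := by
    rw [hσ', Real.log_mul hσ.ne' (Real.exp_pos _).ne', Real.log_exp, ← exp_add,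
      show (Real.log σ : ℂ) * (s - 1) + ((Real.log σ + -u : ℝ) : ℂ) * (1 - s - 1) =
        s * u - Real.log σ by push_cast; ring,
      exp_sub, ← ofReal_exp, Real.exp_log hσ]
  rw [show (1 : ℂ) - σ = ((1 - σ : ℝ) : ℂ) by push_cast; ring,
    cpow_def_of_ne_zero (ofReal_ne_zero.mpr hσ.ne'),
    cpow_def_of_ne_zero (ofReal_ne_zero.mpr hσ'_pos.ne'), ← ofReal_log hσ.le,
    ← ofReal_log hσ'_pos.le, hexp, hσ', Complex.cosh, real_smul]
  push_cast
  rw [hσe]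
  have h₁ : cexp ((s - 1 / 2) * u) = cexp (s * u) * cexp (-(u / 2)) := by
    rw [← exp_add]; ring_nf
  have h₂ : cexp (-u) = cexp (-(u / 2)) * cexp (-(u / 2)) := by rw [← exp_add]; ring_nf
  have h₃ : cexp (u / 2) = (cexp (-(u / 2)))⁻¹ := by rw [exp_neg, inv_inv]
  have : cexp (-(u / 2)) ≠ 0 := exp_ne_zero _
  have : 1 + cexp (-(u / 2)) * cexp (-(u / 2)) ≠ 0 := by
    rw [← h₂]; exact_mod_cast (by positivity : (0 : ℝ) < 1 + Real.exp (-u)).ne'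
  rw [h₁, h₂, h₃]
  field_simp

theorem integrable_and_integral_cexp_mul_div_two_cosh {s : ℂ} (hs₀ : 0 < s.re)
    (hs₁ : s.re < 1) :
    Integrable (fun u : ℝ => cexp ((s - 1 / 2) * u) / (2 * Complex.cosh (u / 2))) ∧
      ∫ u : ℝ, cexp ((s - 1 / 2) * u) / (2 * Complex.cosh (u / 2)) =
        π / Complex.sin (π * s) := by
  have hs₁' : 0 < (1 - s).re := by simpa using hs₁
  have hderiv (u : ℝ) (_ : u ∈ Set.univ) :=
    (Real.hasDerivAt_sigmoid u).hasDerivWithinAt (s := .univ)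
  have hmono : MonotoneOn Real.sigmoid .univ := Real.sigmoid_monotone.monotoneOn _
  let g : ℝ → ℂ := fun y => (y : ℂ) ^ (s - 1) * (1 - (y : ℂ)) ^ (1 - s - 1)
  have hg : IntegrableOn g (Set.Ioo 0 1) :=
    (intervalIntegrable_iff_integrableOn_Ioo_of_le zero_le_one).mp
      (betaIntegral_convergent hs₀ hs₁')
  have hbeta : betaIntegral s (1 - s) = ∫ y in Set.Ioo 0 1, g y := by
    rw [betaIntegral, intervalIntegral.integral_of_le zero_le_one, integral_Ioc_eq_integral_Ioo]
  have hreflection : betaIntegral s (1 - s) = π / Complex.sin (π * s) := by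
    have := Gamma_mul_Gamma_eq_betaIntegral hs₀ hs₁'
    rwa [add_sub_cancel, Gamma_one, one_mul, Gamma_mul_Gamma_one_sub, eq_comm] at this
  rw [← Real.range_sigmoid, ← Set.image_univ,
    integral_image_eq_integral_deriv_smul_of_monotoneOn MeasurableSet.univ hderiv hmono] at hbeta
  rw [← Real.range_sigmoid, ← Set.image_univ,
    integrableOn_image_iff_integrableOn_deriv_smul_of_monotoneOn MeasurableSet.univ hderiv
      hmono] at hg
  simp only [g, sigmoid_mul_one_sub_sigmoid_smul_betaIntegrand, Measure.restrict_univ,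
    integrableOn_univ] at hbeta hg
  exact ⟨hg, hbeta ▸ hreflection⟩

theorem integrable_and_integral_cexp_mul_I_div_cosh (x : ℝ) :
    Integrable (fun t : ℝ => cexp (x * t * I) / (Real.cosh (π * t) : ℂ)) ∧
      ∫ t : ℝ, cexp (x * t * I) / (Real.cosh (π * t) : ℂ) = 1 / Complex.cosh (x / 2) := by
  have hπ : (π : ℂ) ≠ 0 := ofReal_ne_zero.mpr Real.pi_ne_zero
  set s : ℂ := 1 / 2 + (x / (2 * π) : ℝ) * I with hs
  have hs_re : s.re = 1 / 2 := by
    simp only [hs, add_re, mul_re, I_re, I_im, ofReal_re, ofReal_im]; norm_num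
  obtain ⟨hint, hval⟩ := integrable_and_integral_cexp_mul_div_two_cosh (s := s)
    (by rw [hs_re]; norm_num) (by rw [hs_re]; norm_num)
  set g := fun u : ℝ => cexp ((s - 1 / 2) * u) / (2 * Complex.cosh (u / 2))
  have hsub : (fun t : ℝ => cexp (x * t * I) / (Real.cosh (π * t) : ℂ)) =
      fun t => 2 * g (2 * π * t) := by
    ext t
    simp only [g, hs, ofReal_cosh]
    push_cast
    field_simp
    ring_nf
  have hsin : Complex.sin (π * s) = Complex.cosh (x / 2) := by
    rw [hs, show (π : ℂ) * (1 / 2 + (x / (2 * π) : ℝ) * I) = x / 2 * I + π / 2 by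
      push_cast; field_simp; ring, sin_add_pi_div_two, cos_mul_I]
  rw [hsub]
  refine ⟨(hint.comp_mul_left' (by positivity)).const_mul 2, ?_⟩
  rw [integral_const_mul, Measure.integral_comp_mul_left g, hval, hsin,
    abs_of_pos (by positivity), real_smul]
  push_cast
  field_simp

theorem integrable_and_integral_cpow_mul_cpow_div_cosh {a b : ℝ} (ha : 0 < a) (hb : 0 < b) :
    Integrable (fun t : ℝ => (a : ℂ) ^ (I * t - 1 / 2) * (b : ℂ) ^ (-(I * t) - 1 / 2) /
        (Real.cosh (π * t) : ℂ)) ∧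
      ∫ t : ℝ, (a : ℂ) ^ (I * t - 1 / 2) * (b : ℂ) ^ (-(I * t) - 1 / 2) /
          (Real.cosh (π * t) : ℂ) = 2 / (a + b) := by
  have ha' : (a : ℂ) ≠ 0 := ofReal_ne_zero.mpr ha.ne'
  have hb' : (b : ℂ) ≠ 0 := ofReal_ne_zero.mpr hb.ne'
  obtain ⟨hint, hval⟩ := integrable_and_integral_cexp_mul_I_div_cosh (Real.log a - Real.log b)
  have hpt : (fun t : ℝ =>
      (a : ℂ) ^ (I * t - 1 / 2) * (b : ℂ) ^ (-(I * t) - 1 / 2) / (Real.cosh (π * t) : ℂ)) =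
      fun t : ℝ => cexp (-(log a + log b) / 2) *
        (cexp ((Real.log a - Real.log b : ℝ) * t * I) / (Real.cosh (π * t) : ℂ)) := by
    ext t
    rw [cpow_def_of_ne_zero ha', cpow_def_of_ne_zero hb', ← exp_add, ← mul_div_assoc,
      ← exp_add, ofReal_sub, ← ofReal_log ha.le, ← ofReal_log hb.le]
    ring_nf
  rw [hpt]
  refine ⟨hint.const_mul _, ?_⟩
  rw [integral_const_mul, hval]
  have hsq (z : ℂ) (hz : z ≠ 0) : cexp (log z / 2) ^ 2 = z := by
    rw [← exp_nat_mul]; push_cast; rw [mul_div_cancel₀ _ two_ne_zero, exp_log hz]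
  set p := cexp (log a / 2)
  set q := cexp (log b / 2)
  have hpq : cexp (-(log a + log b) / 2) = (p * q)⁻¹ := by
    rw [← exp_add, ← exp_neg]; ring_nf
  have hcosh : Complex.cosh ((Real.log a - Real.log b : ℝ) / 2) = (p / q + q / p) / 2 := by
    rw [Complex.cosh, ofReal_sub, ofReal_log ha.le, ofReal_log hb.le, ← exp_sub, ← exp_sub]
    ring_nf
  have : p ≠ 0 := exp_ne_zero _
  have : q ≠ 0 := exp_ne_zero _
  have hpa : p ^ 2 = a := hsq a ha'
  have hqb : q ^ 2 = b := hsq b hb'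
  rw [hpq, hcosh, ← hpa, ← hqb]
  field_simp

theorem matCpow_of_isHermitian {n : ℕ} {A : Matrix (Fin n) (Fin n) ℂ} (hA : A.IsHermitian)
    (z : ℂ) :
    matCpow A z = conjStarAlgAut ℂ _ hA.eigenvectorUnitary
      (diagonal fun i => (hA.eigenvalues i : ℂ) ^ z) := by
  rw [matCpow, dif_pos hA, conjStarAlgAut_apply]

theorem Matrix.integral_mul_mul_apply {𝕜 m n p q α : Type*} [RCLike 𝕜] [Fintype n]
    [Fintype p] [MeasurableSpace α] {μ : Measure α} (L : Matrix m n 𝕜)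
    (F : α → Matrix n p 𝕜) (R : Matrix p q 𝕜) (hF : ∀ k l, Integrable (fun t => F t k l) μ)
    (i : m) (j : q) :
    ∫ t, (L * F t * R) i j ∂μ = (L * (of fun k l => ∫ t, F t k l ∂μ) * R) i j := by
  simp only [mul_apply, of_apply, Finset.sum_mul]
  rw [integral_finsetSum _ fun l _ => integrable_finsetSum _ fun k _ =>
    ((hF k l).const_mul _).mul_const _]
  refine Finset.sum_congr rfl fun l _ => ?_
  rw [integral_finsetSum _ fun k _ => ((hF k l).const_mul _).mul_const _]
  refine Finset.sum_congr rfl fun k _ => ?_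
  rw [integral_mul_const, integral_const_mul]

theorem diagonal_mul_add_mul_diagonal_of_div_add {ι K : Type*} [Fintype ι] [DecidableEq ι]
    [Field K] (d : ι → K) (C : Matrix ι ι K) (hd : ∀ k l, d k + d l ≠ 0) :
    diagonal d * (of fun k l => C k l / (d k + d l)) +
      (of fun k l => C k l / (d k + d l)) * diagonal d = C := by
  ext k l
  simp only [Matrix.add_apply, diagonal_mul, mul_diagonal, of_apply]
  field_simp [hd k l]

theorem integral_conj_diagonal_cpow_mul_mul_div_cosh {ι : Type*} [Fintype ι] [DecidableEq ι]
    (u : unitary (Matrix ι ι ℂ)) {d : ι → ℝ} (hd : ∀ k, 0 < d k) (B : Matrix ι ι ℂ) :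
    (of fun i j => ∫ t : ℝ,
      (conjStarAlgAut ℂ _ u (diagonal fun k => (d k : ℂ) ^ (I * t - 1 / 2)) * B *
        conjStarAlgAut ℂ _ u (diagonal fun k => (d k : ℂ) ^ (-(I * t) - 1 / 2))) i j /
          (Real.cosh (π * t) : ℂ)) =
      conjStarAlgAut ℂ _ u (of fun k l =>
        (conjStarAlgAut ℂ _ u).symm B k l * (2 / (d k + d l))) := by
  set C := (conjStarAlgAut ℂ _ u).symm B
  let G : ℝ → Matrix ι ι ℂ := fun t => (Real.cosh (π * t) : ℂ)⁻¹ •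
    ((diagonal fun k => (d k : ℂ) ^ (I * t - 1 / 2)) * C *
      diagonal fun k => (d k : ℂ) ^ (-(I * t) - 1 / 2))
  have hG (t : ℝ) (k l : ι) : G t k l = C k l *
      ((d k : ℂ) ^ (I * t - 1 / 2) * (d l : ℂ) ^ (-(I * t) - 1 / 2) /
        (Real.cosh (π * t) : ℂ)) := by
    simp only [G, Matrix.smul_apply, diagonal_mul, mul_diagonal, smul_eq_mul]
    ring
  have hB : B = conjStarAlgAut ℂ _ u C := (StarAlgEquiv.apply_symm_apply _ B).symm
  have hpt (t : ℝ) (i j : ι) :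
      (conjStarAlgAut ℂ _ u (diagonal fun k => (d k : ℂ) ^ (I * t - 1 / 2)) * B *
        conjStarAlgAut ℂ _ u (diagonal fun k => (d k : ℂ) ^ (-(I * t) - 1 / 2))) i j /
          (Real.cosh (π * t) : ℂ) =
        ((u : Matrix ι ι ℂ) * G t * star (u : Matrix ι ι ℂ)) i j := by
    rw [hB, ← map_mul, ← map_mul, div_eq_inv_mul, ← smul_eq_mul, ← Matrix.smul_apply,
      ← map_smul, conjStarAlgAut_apply]
  have hGint (k l : ι) : Integrable fun t => G t k l := by
    simp only [hG]
    exact (integrable_and_integral_cpow_mul_cpow_div_cosh (hd k) (hd l)).1.const_mul _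
  have hGval : (of fun k l => ∫ t, G t k l) = of fun k l => C k l * (2 / (d k + d l)) := by
    ext k l
    simp only [of_apply, hG]
    rw [integral_const_mul, (integrable_and_integral_cpow_mul_cpow_div_cosh (hd k) (hd l)).2]
  ext i j
  simp only [of_apply, hpt]
  rw [Matrix.integral_mul_mul_apply _ _ _ hGint, hGval, conjStarAlgAut_apply]

/-- If `A` is positive definite Hermitian and `B` arbitrary, then
`Y := (1/2) ∫_ℝ A^{it-1/2} B A^{-it-1/2} dt / cosh (π t)` satisfies `A Y + Y A = B`. -/
theorem sylvester_integral_solution {n : ℕ} (A B : Matrix (Fin n) (Fin n) ℂ)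
    (hA : A.PosDef)
    (Y : Matrix (Fin n) (Fin n) ℂ)
    (hY : Y = (1 / 2 : ℂ) • Matrix.of fun i j => ∫ t : ℝ,
        (matCpow A (Complex.I * t - 1 / 2) * B * matCpow A (-(Complex.I * t) - 1 / 2)) i j /
          (Real.cosh (Real.pi * t) : ℂ)) :
    A * Y + Y * A = B := by
  set u := hA.1.eigenvectorUnitary
  set d := hA.1.eigenvalues
  set C := (conjStarAlgAut ℂ _ u).symm B
  have hd (k l) : (d k : ℂ) + d l ≠ 0 := by
    exact_mod_cast (add_pos (hA.eigenvalues_pos k) (hA.eigenvalues_pos l)).ne'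
  have hA' : A = conjStarAlgAut ℂ _ u (diagonal fun k => (d k : ℂ)) := hA.1.spectral_theorem
  have hY' : Y = conjStarAlgAut ℂ _ u (of fun k l => C k l / (d k + d l)) := by
    simp_rw [hY, matCpow_of_isHermitian hA.1]
    rw [integral_conj_diagonal_cpow_mul_mul_div_cosh u hA.eigenvalues_pos B, ← map_smul]
    congr 1
    ext k l
    simp only [Matrix.smul_apply, of_apply, smul_eq_mul]
    ring
  rw [hA', hY', ← map_mul, ← map_mul, ← map_add,
    diagonal_mul_add_mul_diagonal_of_div_add _ _ hd, StarAlgEquiv.apply_symm_apply]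
end

section
/- Let g be a positive definite symmetric n×n real matrix and J an invertible n×n real matrix. Then det Λ(J,g) = det J / |det J|; in particular, if det J > 0 then det Λ(J,g) = 1, so Λ(J,g) belongs to SO(n). -/
/-!
Both square roots are positive semidefinite, so their determinants are the nonnegative roots
`√(det g) / |det J|` and `√(det g)`, whence `det Λ = det J / |det J|`. Since they are also
symmetric, `Λᵀ Λ = (√g)⁻¹ Jᵀ (J⁻ᵀ g J⁻¹) J (√g)⁻¹ = (√g)⁻¹ g (√g)⁻¹ = 1`.
-/

open Matrix

/-- The positive semidefinite square root of a positive semidefinite real matrix.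
(Junk value `0` if `A` is not positive semidefinite.) -/
noncomputable def matSqrtR {n : ℕ} (A : Matrix (Fin n) (Fin n) ℝ) :
    Matrix (Fin n) (Fin n) ℝ :=
  @dite _ A.PosSemidef (Classical.dec _) (fun h => (h.1.eigenvectorUnitary : Matrix (Fin n) (Fin n) ℝ) *
    diagonal ((↑) ∘ (√·) ∘ h.1.eigenvalues) * (star h.1.eigenvectorUnitary : Matrix (Fin n) (Fin n) ℝ)) (fun _ => 0)

/-- The natural gauge transformation `Λ(J,g) := √(J⁻ᵀ g J⁻¹) · J · (√g)⁻¹`. -/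
noncomputable def Lam {n : ℕ} (J g : Matrix (Fin n) (Fin n) ℝ) :
    Matrix (Fin n) (Fin n) ℝ :=
  matSqrtR ((J⁻¹)ᵀ * g * J⁻¹) * J * (matSqrtR g)⁻¹

open scoped MatrixOrder

section

variable {n : ℕ} {A : Matrix (Fin n) (Fin n) ℝ}

theorem matSqrtR_eq_sqrt (hA : A.PosSemidef) : matSqrtR A = CFC.sqrt A := by
  rw [matSqrtR, dif_pos hA, CFC.sqrt_eq_real_sqrt A hA.nonneg, cfcₙ_eq_cfc, hA.1.cfc_eq,
    IsHermitian.cfc, Unitary.conjStarAlgAut_apply]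
  rfl

theorem posSemidef_matSqrtR (hA : A.PosSemidef) : (matSqrtR A).PosSemidef :=
  matSqrtR_eq_sqrt hA ▸ (CFC.sqrt_nonneg A).posSemidef

theorem matSqrtR_mul_self (hA : A.PosSemidef) : matSqrtR A * matSqrtR A = A :=
  matSqrtR_eq_sqrt hA ▸ CFC.sqrt_mul_sqrt_self A hA.nonneg

theorem transpose_matSqrtR (hA : A.PosSemidef) : (matSqrtR A)ᵀ = matSqrtR A :=
  (isHermitian_iff_isSymm.1 (posSemidef_matSqrtR hA).isHermitian).eq

theorem det_matSqrtR (hA : A.PosSemidef) : (matSqrtR A).det = √A.det := by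
  rw [matSqrtR_eq_sqrt hA, hA.det_sqrt, RCLike.sqrt_real]

variable {J g : Matrix (Fin n) (Fin n) ℝ}

theorem posSemidef_inv_transpose_mul_mul_inv (hg : g.PosSemidef) :
    ((J⁻¹)ᵀ * g * J⁻¹).PosSemidef := by
  simpa using hg.conjTranspose_mul_mul_same J⁻¹

theorem det_Lam (hg : g.PosDef) (hJ : J.det ≠ 0) : (Lam J g).det = J.det / |J.det| := by
  have hgJ := posSemidef_inv_transpose_mul_mul_inv (J := J) hg.posSemidef
  have hsqrt : √g.det ≠ 0 := (Real.sqrt_pos.2 hg.det_pos).ne'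
  rw [Lam, det_mul, det_mul, det_nonsing_inv, det_matSqrtR hgJ, det_matSqrtR hg.posSemidef,
    det_mul, det_mul, det_transpose, det_nonsing_inv, Ring.inverse_eq_inv',
    show J.det⁻¹ * g.det * J.det⁻¹ = J.det⁻¹ ^ 2 * g.det by ring, Real.sqrt_mul (sq_nonneg _),
    Real.sqrt_sq_eq_abs, abs_inv]
  field_simp

theorem transpose_Lam_mul_self (hg : g.PosDef) (hJ : IsUnit J) : (Lam J g)ᵀ * Lam J g = 1 := by
  have hgJ := posSemidef_inv_transpose_mul_mul_inv (J := J) hg.posSemidef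
  have hJg : Jᵀ * ((J⁻¹)ᵀ * g * J⁻¹) * J = g := by
    have hJdet := (isUnit_iff_isUnit_det J).1 hJ
    rw [← Matrix.mul_assoc, ← Matrix.mul_assoc, ← transpose_mul, nonsing_inv_mul J hJdet,
      transpose_one, Matrix.one_mul, Matrix.mul_assoc, nonsing_inv_mul J hJdet, Matrix.mul_one]
  have hT : IsUnit (matSqrtR g).det := by
    rw [det_matSqrtR hg.posSemidef]
    exact (Real.sqrt_pos.2 hg.det_pos).ne'.isUnit
  have hSS := matSqrtR_mul_self hgJ
  have hTT := matSqrtR_mul_self hg.posSemidef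
  rw [Lam, transpose_mul, transpose_mul, transpose_nonsing_inv, transpose_matSqrtR hg.posSemidef,
    transpose_matSqrtR hgJ]
  generalize matSqrtR ((J⁻¹)ᵀ * g * J⁻¹) = S at hSS ⊢
  generalize matSqrtR g = T at hT hTT ⊢
  calc T⁻¹ * (Jᵀ * S) * (S * J * T⁻¹) = T⁻¹ * (Jᵀ * (S * S) * J) * T⁻¹ := by
        simp only [Matrix.mul_assoc]
    _ = T⁻¹ * (T * T) * T⁻¹ := by rw [hSS, hJg, hTT]
    _ = (T⁻¹ * T) * (T * T⁻¹) := by simp only [Matrix.mul_assoc]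
    _ = 1 := by rw [nonsing_inv_mul T hT, mul_nonsing_inv T hT, Matrix.one_mul]

end

/-- For `g` positive definite symmetric and `J` invertible,
`det Λ(J,g) = det J / |det J|`; in particular if `det J > 0` then `det Λ(J,g) = 1`,
so `Λ(J,g)` belongs to `SO(n)`. -/
theorem Lam_det {n : ℕ} (g J : Matrix (Fin n) (Fin n) ℝ)
    (hg : g.PosDef) (hJ : IsUnit J) :
    (Lam J g).det = J.det / |J.det| ∧
      (0 < J.det → (Lam J g).det = 1 ∧ (Lam J g)ᵀ * Lam J g = 1) := by
  have hdet := det_Lam hg ((isUnit_iff_isUnit_det J).1 hJ).ne_zero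
  refine ⟨hdet, fun hpos => ⟨?_, transpose_Lam_mul_self hg hJ⟩⟩
  rw [hdet, abs_of_pos hpos, div_self hpos.ne']
end
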